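/- (Limitation of SCM lower bounds) Let C_J = {μ₁,...,μ_J} with J < N and fix μ̃ ∈ D. Then there exist Hermitian matrices Ā₁,...,Ā_Q ∈ ℂ^(N×N) such that the matrix function Ā(μ) = Σ_q θ_q(μ) Ā_q satisfies λ_min(Ā(μ̃)) = λ_LB(μ̃;C_J) and λ_min(Ā(μᵢ)) = λ_min(A(μᵢ)) for all i = 1,...,J. Explicitly, one may take Ā_q = VV*A_qVV* + y_q V⊥V⊥*, where V, V⊥ are orthonormal bases of the span 𝒱 of eigenvectors v₁,...,v_J (for the smallest eigenvalues at μ₁,...,μ_J) and its orthogonal complement, and y ∈ ℝ^Q is a minimizer achieving λ_LB(μ̃;C_J) = θ(μ̃)ᵀ y over 𝒴_LB(C_J). -/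

import Mathlib

open Matrix

/-- Smallest eigenvalue of a (Hermitian) matrix. -/
noncomputable def lamMin {n : ℕ} {𝕜 : Type*} [RCLike 𝕜] (A : Matrix (Fin n) (Fin n) 𝕜) : ℝ :=
  if h : A.IsHermitian then ⨅ i, h.eigenvalues i else 0

/-- Largest eigenvalue of a (Hermitian) matrix. -/
noncomputable def lamMax {n : ℕ} {𝕜 : Type*} [RCLike 𝕜] (A : Matrix (Fin n) (Fin n) 𝕜) : ℝ :=
  if h : A.IsHermitian then ⨆ i, h.eigenvalues i else 0

/-- Rayleigh quotient u*Au/(u*u). -/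
noncomputable def RQ {n : ℕ} (A : Matrix (Fin n) (Fin n) ℂ) (u : Fin n → ℂ) : ℝ :=
  (star u ⬝ᵥ A *ᵥ u).re / (star u ⬝ᵥ u).re

/-!
Choose a unit vector `w` orthogonal to all `v i` (possible since `J < N`), a minimizer `y` of the
SCM linear program, and put `Ā_q = Q A_q Q + y_q w w⋆` with `Q = 1 - w w⋆`; then
`Ā(μ) = Q A(μ) Q + (θ(μ)ᵀ y) w w⋆`. Each `v i` is still an eigenvector of `Ā(μᵢ)` for
`λ_min(A(μᵢ))`, and `w` is an eigenvector of `Ā(μ̃)` for `θ(μ̃)ᵀ y = λ_LB`. Splitting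
`u = Q u + (w⋆u) w` shows that these are the smallest eigenvalues: at `μᵢ` because
`θ(μᵢ)ᵀ y ≥ λ_min(A(μᵢ))`, at `μ̃` because the Rayleigh quotients `(u⋆A_q u / u⋆u)_q` form a
feasible point of the program, so that `u⋆A(μ̃)u ≥ λ_LB ‖u‖²`.
-/

section UnitVector

open scoped ComplexOrder

theorem re_star_dotProduct_self_pos {m : Type*} [Fintype m] {u : m → ℂ} (hu : u ≠ 0) :
    0 < (star u ⬝ᵥ u).re :=
  (Complex.pos_iff.mp (dotProduct_star_self_pos_iff.mpr hu)).1

theorem exists_unit_orthogonal {ι m : Type*} [Fintype ι] [Fintype m] (v : ι → m → ℂ)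
    (h : Fintype.card ι < Fintype.card m) :
    ∃ w : m → ℂ, star w ⬝ᵥ w = 1 ∧ ∀ i, star w ⬝ᵥ v i = 0 := by
  obtain ⟨x, hx, hx0⟩ := Submodule.exists_mem_ne_zero_of_ne_bot <|
    (of fun i => star (v i)).mulVecLin.ker_ne_bot_of_finrank_lt (by simpa using h)
  have hxv : ∀ i, star x ⬝ᵥ v i = 0 := fun i => by
    rw [star_dotProduct, show star (v i) ⬝ᵥ x = 0 from congr_fun hx i, star_zero]
  set s := (star x ⬝ᵥ x).re
  have hs : 0 < s := re_star_dotProduct_self_pos hx0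
  have hxx : star x ⬝ᵥ x = s := Complex.eq_re_of_ofReal_le (dotProduct_star_self_nonneg x)
  refine ⟨(√s)⁻¹ • x, ?_, fun i => ?_⟩
  · rw [star_smul, star_trivial, smul_dotProduct, dotProduct_smul, hxx, smul_smul,
      Complex.real_smul, ← mul_inv, Real.mul_self_sqrt hs.le]
    push_cast
    exact inv_mul_cancel₀ (by exact_mod_cast hs.ne')
  · rw [star_smul, smul_dotProduct, hxv i, smul_zero]

end UnitVector

section Rayleigh

variable {n : ℕ}

theorem isHermitian_sum_smul {ι : Type*} [Fintype ι] {A : ι → Matrix (Fin n) (Fin n) ℂ}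
    (hA : ∀ q, (A q).IsHermitian) (θ : ι → ℝ) : (∑ q, (θ q : ℂ) • A q).IsHermitian :=
  isSelfAdjoint_sum _ fun q _ => (hA q).smul (Complex.conj_ofReal (θ q))

theorem RQ_sum_smul {ι : Type*} [Fintype ι] (A : ι → Matrix (Fin n) (Fin n) ℂ) (θ : ι → ℝ)
    (u : Fin n → ℂ) : RQ (∑ q, (θ q : ℂ) • A q) u = ∑ q, θ q * RQ (A q) u := by
  simp only [RQ, sum_mulVec, dotProduct_sum, smul_mulVec, dotProduct_smul, Complex.re_sum,
    smul_eq_mul, Complex.re_ofReal_mul, Finset.sum_div, mul_div_assoc]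

namespace Matrix.IsHermitian

variable {B : Matrix (Fin n) (Fin n) ℂ}

theorem re_star_dotProduct_eigenvectorBasis_self (hB : B.IsHermitian) (j : Fin n) :
    (star ⇑(hB.eigenvectorBasis j) ⬝ᵥ ⇑(hB.eigenvectorBasis j)).re = 1 := by
  rw [dotProduct_comm, ← EuclideanSpace.inner_eq_star_dotProduct, inner_self_eq_norm_sq_to_K,
    hB.eigenvectorBasis.orthonormal.1 j]
  simp

/-- The quadratic form of `B` written in the coordinates `x = U⋆ u` of an eigenbasis `U`. -/
theorem exists_re_dotProduct_eq_sum_eigenvalues (hB : B.IsHermitian) (u : Fin n → ℂ) :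
    ∃ x : Fin n → ℂ, (star u ⬝ᵥ u).re = ∑ j, Complex.normSq (x j) ∧
      (star u ⬝ᵥ B *ᵥ u).re = ∑ j, hB.eigenvalues j * Complex.normSq (x j) := by
  set U : Matrix (Fin n) (Fin n) ℂ := (hB.eigenvectorUnitary : Matrix (Fin n) (Fin n) ℂ)
  have hUU : U * star U = 1 := Matrix.mem_unitaryGroup_iff.mp hB.eigenvectorUnitary.2
  set x := star U *ᵥ u with hx
  have hsx : star x = star u ᵥ* U := by
    rw [hx, star_mulVec, star_eq_conjTranspose, conjTranspose_conjTranspose]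
  have hnormSq : ∀ z : ℂ, star z * z = (Complex.normSq z : ℂ) := fun z => by
    rw [Complex.star_def, mul_comm, Complex.mul_conj]
  refine ⟨x, ?_, ?_⟩
  · have hxu : star x ⬝ᵥ x = star u ⬝ᵥ u := by
      rw [hsx, hx, dotProduct_mulVec, vecMul_vecMul, hUU, vecMul_one]
    rw [← hxu]
    simp only [dotProduct, Pi.star_apply, hnormSq, ← Complex.ofReal_sum, Complex.ofReal_re]
  · have hxu : star u ⬝ᵥ B *ᵥ u
        = star x ⬝ᵥ diagonal (Complex.ofReal ∘ hB.eigenvalues) *ᵥ x := by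
      conv_lhs => rw [hB.spectral_theorem, Unitary.conjStarAlgAut_apply]
      rw [← mulVec_mulVec, ← mulVec_mulVec, dotProduct_mulVec, ← hsx, ← hx]
      rfl
    rw [hxu]
    simp only [dotProduct, mulVec_diagonal, Pi.star_apply, Function.comp_apply,
      mul_left_comm (star (x _)), hnormSq, ← Complex.ofReal_mul, ← Complex.ofReal_sum,
      Complex.ofReal_re]

theorem lamMin_mul_le (hB : B.IsHermitian) (u : Fin n → ℂ) :
    lamMin B * (star u ⬝ᵥ u).re ≤ (star u ⬝ᵥ B *ᵥ u).re := by
  obtain ⟨x, hu, hBu⟩ := hB.exists_re_dotProduct_eq_sum_eigenvalues u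
  rw [hu, hBu, Finset.mul_sum]
  refine Finset.sum_le_sum fun j _ => mul_le_mul_of_nonneg_right ?_ (Complex.normSq_nonneg _)
  rw [lamMin, dif_pos hB]
  exact ciInf_le (Finite.bddBelow_range _) j

theorem le_lamMax_mul (hB : B.IsHermitian) (u : Fin n → ℂ) :
    (star u ⬝ᵥ B *ᵥ u).re ≤ lamMax B * (star u ⬝ᵥ u).re := by
  obtain ⟨x, hu, hBu⟩ := hB.exists_re_dotProduct_eq_sum_eigenvalues u
  rw [hu, hBu, Finset.mul_sum]
  refine Finset.sum_le_sum fun j _ => mul_le_mul_of_nonneg_right ?_ (Complex.normSq_nonneg _)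
  rw [lamMax, dif_pos hB]
  exact le_ciSup (Finite.bddAbove_range _) j

theorem lamMin_le_RQ (hB : B.IsHermitian) {u : Fin n → ℂ} (hu : u ≠ 0) : lamMin B ≤ RQ B u :=
  (le_div_iff₀ (re_star_dotProduct_self_pos hu)).mpr (hB.lamMin_mul_le u)

theorem RQ_le_lamMax (hB : B.IsHermitian) {u : Fin n → ℂ} (hu : u ≠ 0) : RQ B u ≤ lamMax B :=
  (div_le_iff₀ (re_star_dotProduct_self_pos hu)).mpr (hB.le_lamMax_mul u)

theorem lamMin_eq_of_mulVec_eq (hB : B.IsHermitian) {e : Fin n → ℂ} (he : e ≠ 0) {t : ℝ}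
    (hBe : B *ᵥ e = (t : ℂ) • e) (ht : ∀ u, t * (star u ⬝ᵥ u).re ≤ (star u ⬝ᵥ B *ᵥ u).re) :
    lamMin B = t := by
  apply le_antisymm
  · have h := hB.lamMin_mul_le e
    rw [hBe, dotProduct_smul, smul_eq_mul, Complex.re_ofReal_mul] at h
    exact le_of_mul_le_mul_right h (re_star_dotProduct_self_pos he)
  · obtain ⟨i, -⟩ := Function.ne_iff.mp he
    have : Nonempty (Fin n) := ⟨i⟩
    rw [lamMin, dif_pos hB]
    refine le_ciInf fun j => ?_
    have h := ht (hB.eigenvectorBasis j)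
    rwa [hB.re_star_dotProduct_eigenvectorBasis_self, mul_one, ← RCLike.re_to_complex,
      ← hB.eigenvalues_eq] at h

end Matrix.IsHermitian

end Rayleigh

section Compression

variable {n : ℕ} (w : Fin n → ℂ)

/-- For a unit vector `w`: `M` compressed to `wᗮ`, with `w` adjoined as an eigenvector for `c`. -/
noncomputable def compressWithEigenpair (M : Matrix (Fin n) (Fin n) ℂ) (c : ℝ) :
    Matrix (Fin n) (Fin n) ℂ :=
  (1 - vecMulVec w (star w)) * M * (1 - vecMulVec w (star w)) + (c : ℂ) • vecMulVec w (star w)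

theorem vecMulVec_star_mulVec (u : Fin n → ℂ) :
    vecMulVec w (star w) *ᵥ u = (star w ⬝ᵥ u) • w := by
  rw [vecMulVec_mulVec, op_smul_eq_smul]

theorem one_sub_vecMulVec_star_mulVec (u : Fin n → ℂ) :
    (1 - vecMulVec w (star w)) *ᵥ u = u - (star w ⬝ᵥ u) • w := by
  rw [sub_mulVec, one_mulVec, vecMulVec_star_mulVec]

theorem isHermitian_vecMulVec_star : (vecMulVec w (star w)).IsHermitian := by
  rw [IsHermitian, conjTranspose_vecMulVec, star_star]

theorem isHermitian_one_sub_vecMulVec_star : (1 - vecMulVec w (star w)).IsHermitian :=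
  isHermitian_one.sub (isHermitian_vecMulVec_star w)

variable {w}

theorem isHermitian_compressWithEigenpair {M : Matrix (Fin n) (Fin n) ℂ} (hM : M.IsHermitian)
    (c : ℝ) : (compressWithEigenpair w M c).IsHermitian := by
  refine IsHermitian.add ?_ ((isHermitian_vecMulVec_star w).smul (Complex.conj_ofReal c))
  have h := isHermitian_mul_mul_conjTranspose (1 - vecMulVec w (star w)) hM
  rwa [(isHermitian_one_sub_vecMulVec_star w).eq] at h

theorem sum_smul_compressWithEigenpair {ι : Type*} [Fintype ι]
    (M : ι → Matrix (Fin n) (Fin n) ℂ) (θ c : ι → ℝ) :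
    ∑ q, (θ q : ℂ) • compressWithEigenpair w (M q) (c q)
      = compressWithEigenpair w (∑ q, (θ q : ℂ) • M q) (∑ q, θ q * c q) := by
  simp only [compressWithEigenpair, smul_add, Finset.sum_add_distrib, Finset.mul_sum,
    Finset.sum_mul, mul_smul_comm, smul_mul_assoc, smul_smul]
  push_cast
  rw [Finset.sum_smul]

theorem compressWithEigenpair_mulVec_of_orthogonal {M : Matrix (Fin n) (Fin n) ℂ} (c : ℝ)
    {e : Fin n → ℂ} (he : star w ⬝ᵥ e = 0) {t : ℂ} (hMe : M *ᵥ e = t • e) :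
    compressWithEigenpair w M c *ᵥ e = t • e := by
  have hQe : (1 - vecMulVec w (star w)) *ᵥ e = e := by
    rw [one_sub_vecMulVec_star_mulVec, he, zero_smul, sub_zero]
  rw [compressWithEigenpair, add_mulVec, ← mulVec_mulVec, ← mulVec_mulVec, hQe, hMe, mulVec_smul,
    hQe, smul_mulVec, vecMulVec_star_mulVec, he, zero_smul, smul_zero, add_zero]

theorem re_dotProduct_compressWithEigenpair_mulVec (M : Matrix (Fin n) (Fin n) ℂ) (c : ℝ)
    (u : Fin n → ℂ) :
    (star u ⬝ᵥ compressWithEigenpair w M c *ᵥ u).re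
      = (star ((1 - vecMulVec w (star w)) *ᵥ u) ⬝ᵥ M *ᵥ ((1 - vecMulVec w (star w)) *ᵥ u)).re
        + c * Complex.normSq (star w ⬝ᵥ u) := by
  have hQu : star u ᵥ* (1 - vecMulVec w (star w)) = star ((1 - vecMulVec w (star w)) *ᵥ u) := by
    rw [star_mulVec, (isHermitian_one_sub_vecMulVec_star w).eq]
  rw [compressWithEigenpair, add_mulVec, dotProduct_add, ← mulVec_mulVec, ← mulVec_mulVec,
    dotProduct_mulVec, hQu, smul_mulVec, vecMulVec_star_mulVec, dotProduct_smul,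
    dotProduct_smul, star_dotProduct u w, smul_eq_mul, smul_eq_mul, Complex.star_def,
    Complex.mul_conj, Complex.add_re, Complex.re_ofReal_mul, Complex.ofReal_re]

theorem re_star_dotProduct_self_eq_add (hw : star w ⬝ᵥ w = 1) (u : Fin n → ℂ) :
    (star u ⬝ᵥ u).re
      = (star ((1 - vecMulVec w (star w)) *ᵥ u) ⬝ᵥ ((1 - vecMulVec w (star w)) *ᵥ u)).re
        + Complex.normSq (star w ⬝ᵥ u) := by
  have h : star ((1 - vecMulVec w (star w)) *ᵥ u) ⬝ᵥ ((1 - vecMulVec w (star w)) *ᵥ u)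
      = star u ⬝ᵥ u - Complex.normSq (star w ⬝ᵥ u) := by
    rw [one_sub_vecMulVec_star_mulVec, star_sub, star_smul, sub_dotProduct, dotProduct_sub,
      dotProduct_sub, dotProduct_smul, dotProduct_smul, smul_dotProduct, smul_dotProduct, hw,
      star_dotProduct u w, ← Complex.mul_conj, Complex.star_def]
    simp only [smul_eq_mul]
    ring
  rw [h, Complex.sub_re, Complex.ofReal_re, sub_add_cancel]

theorem le_re_dotProduct_compressWithEigenpair (hw : star w ⬝ᵥ w = 1)
    {M : Matrix (Fin n) (Fin n) ℂ} {t c : ℝ}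
    (hM : ∀ z, t * (star z ⬝ᵥ z).re ≤ (star z ⬝ᵥ M *ᵥ z).re) (htc : t ≤ c) (u : Fin n → ℂ) :
    t * (star u ⬝ᵥ u).re ≤ (star u ⬝ᵥ compressWithEigenpair w M c *ᵥ u).re := by
  rw [re_dotProduct_compressWithEigenpair_mulVec, re_star_dotProduct_self_eq_add hw u, mul_add]
  exact add_le_add (hM _) (mul_le_mul_of_nonneg_right htc (Complex.normSq_nonneg _))

theorem compressWithEigenpair_mulVec_self (hw : star w ⬝ᵥ w = 1)
    (M : Matrix (Fin n) (Fin n) ℂ) (c : ℝ) :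
    compressWithEigenpair w M c *ᵥ w = (c : ℂ) • w := by
  have hQw : (1 - vecMulVec w (star w)) *ᵥ w = 0 := by
    rw [one_sub_vecMulVec_star_mulVec, hw, one_smul, sub_self]
  rw [compressWithEigenpair, add_mulVec, ← mulVec_mulVec, ← mulVec_mulVec, hQw, mulVec_zero,
    mulVec_zero, zero_add, smul_mulVec, vecMulVec_star_mulVec, hw, one_smul]

end Compression

section LowerBound

variable {N Q J : ℕ} {X : Type*}

/-- The objective values `θ(μ̃)ᵀ z` over the feasible set `𝒴_LB(C_J)` of the SCM linear program. -/
def scmObjectiveValues (A : Fin Q → Matrix (Fin N) (Fin N) ℂ) (θ : Fin Q → X → ℝ)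
    (μs : Fin J → X) (μt : X) : Set ℝ :=
  {r : ℝ | ∃ z : Fin Q → ℝ,
    (∀ q, lamMin (A q) ≤ z q ∧ z q ≤ lamMax (A q)) ∧
    (∀ i : Fin J, ∑ q, θ q (μs i) * z q ≥ lamMin (∑ q, (θ q (μs i) : ℂ) • A q)) ∧
    r = ∑ q, θ q μt * z q}

theorem le_re_dotProduct_of_isLeast_scmObjectiveValues {A : Fin Q → Matrix (Fin N) (Fin N) ℂ}
    (hA : ∀ q, (A q).IsHermitian) {θ : Fin Q → X → ℝ} {μs : Fin J → X} {μt : X} {lamLB : ℝ}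
    (hLB : IsLeast (scmObjectiveValues A θ μs μt) lamLB) (u : Fin N → ℂ) :
    lamLB * (star u ⬝ᵥ u).re ≤ (star u ⬝ᵥ (∑ q, (θ q μt : ℂ) • A q) *ᵥ u).re := by
  rcases eq_or_ne u 0 with rfl | hu
  · simp
  have hfeas : RQ (∑ q, (θ q μt : ℂ) • A q) u ∈ scmObjectiveValues A θ μs μt := by
    refine ⟨fun q => RQ (A q) u, fun q => ⟨(hA q).lamMin_le_RQ hu, (hA q).RQ_le_lamMax hu⟩,
      fun i => ?_, RQ_sum_smul A _ u⟩
    rw [← RQ_sum_smul]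
    exact (isHermitian_sum_smul hA _).lamMin_le_RQ hu
  exact (le_div_iff₀ (re_star_dotProduct_self_pos hu)).mp (hLB.2 hfeas)

end LowerBound

theorem scm_lower_bound_limitation_general
    {N Q P J : ℕ} (A : Fin Q → Matrix (Fin N) (Fin N) ℂ)
    (hA : ∀ q, (A q).IsHermitian) (θ : Fin Q → (Fin P → ℝ) → ℝ)
    (μs : Fin J → (Fin P → ℝ))
    (μt : Fin P → ℝ)
    (hJN : J < N)
    -- `v i` is a unit eigenvector of `A(μᵢ)` for its smallest eigenvalue
    (v : Fin J → (Fin N → ℂ)) (hv1 : ∀ i, star (v i) ⬝ᵥ v i = 1)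
    (hv : ∀ i, (∑ q, (θ q (μs i) : ℂ) • A q) *ᵥ v i
        = (lamMin (∑ q, (θ q (μs i) : ℂ) • A q) : ℂ) • v i)
    (lamLB : ℝ)
    (hymin : IsLeast {r : ℝ | ∃ z : Fin Q → ℝ,
        (∀ q, lamMin (A q) ≤ z q ∧ z q ≤ lamMax (A q)) ∧
        (∀ i : Fin J, ∑ q, θ q (μs i) * z q ≥ lamMin (∑ q, (θ q (μs i) : ℂ) • A q)) ∧
        r = ∑ q, θ q μt * z q} lamLB) :
    ∃ Abar : Fin Q → Matrix (Fin N) (Fin N) ℂ,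
      (∀ q, (Abar q).IsHermitian) ∧
      lamMin (∑ q, (θ q μt : ℂ) • Abar q) = lamLB ∧
      ∀ i : Fin J, lamMin (∑ q, (θ q (μs i) : ℂ) • Abar q)
          = lamMin (∑ q, (θ q (μs i) : ℂ) • A q) := by
  have hLB := le_re_dotProduct_of_isLeast_scmObjectiveValues hA hymin
  obtain ⟨y, -, hycon, rfl⟩ := hymin.1
  obtain ⟨w, hw, hwv⟩ := exists_unit_orthogonal v (by simpa using hJN)
  have hM ν := isHermitian_compressWithEigenpair (w := w) (isHermitian_sum_smul hA (θ · ν))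
  refine ⟨fun q => compressWithEigenpair w (A q) (y q),
    fun q => isHermitian_compressWithEigenpair (hA q) (y q), ?_, fun i => ?_⟩
  · rw [sum_smul_compressWithEigenpair]
    refine (hM μt _).lamMin_eq_of_mulVec_eq (fun h => by simp [h] at hw)
      (compressWithEigenpair_mulVec_self hw _ _) ?_
    exact le_re_dotProduct_compressWithEigenpair hw hLB le_rfl
  · rw [sum_smul_compressWithEigenpair]
    refine (hM (μs i) _).lamMin_eq_of_mulVec_eq (fun h => by simpa [h] using hv1 i)
      (compressWithEigenpair_mulVec_of_orthogonal _ (hwv i) (hv i)) ?_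
    exact le_re_dotProduct_compressWithEigenpair hw
      (isHermitian_sum_smul hA _).lamMin_mul_le (hycon i)

/-- limitation of the SCM lower bounds: if `J < N`, then for any fixed
`μ̃ ∈ D` there exist Hermitian matrices `Ā_q` such that `Ā(μ) = ∑ q, θ_q(μ) Ā_q`
attains the SCM lower bound at `μ̃` and reproduces the sampled smallest eigenvalues:
`λ_min(Ā(μ̃)) = λ_LB(μ̃;C_J)` and `λ_min(Ā(μᵢ)) = λ_min(A(μᵢ))` for all `i`. -/
theorem scm_lower_bound_limitation
    {N Q P J : ℕ} (A : Fin Q → Matrix (Fin N) (Fin N) ℂ)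
    (hA : ∀ q, (A q).IsHermitian) (θ : Fin Q → (Fin P → ℝ) → ℝ)
    (D : Set (Fin P → ℝ)) (μs : Fin J → (Fin P → ℝ)) (hμs : ∀ i, μs i ∈ D)
    (μt : Fin P → ℝ) (hμt : μt ∈ D)
    (hHerm : ∀ ν : Fin P → ℝ, (∑ q, (θ q ν : ℂ) • A q).IsHermitian)
    (hJN : J < N)
    -- `v i` is a unit eigenvector of `A(μᵢ)` for its smallest eigenvalue
    (v : Fin J → (Fin N → ℂ)) (hv1 : ∀ i, star (v i) ⬝ᵥ v i = 1)
    (hv : ∀ i, (∑ q, (θ q (μs i) : ℂ) • A q) *ᵥ v i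
        = (lamMin (∑ q, (θ q (μs i) : ℂ) • A q) : ℂ) • v i)
    -- `y` is a minimizer of the SCM linear program at `μ̃`
    (y : Fin Q → ℝ)
    (hybox : ∀ q, lamMin (A q) ≤ y q ∧ y q ≤ lamMax (A q))
    (hycon : ∀ i : Fin J, ∑ q, θ q (μs i) * y q ≥ lamMin (∑ q, (θ q (μs i) : ℂ) • A q))
    (lamLB : ℝ) (hlamLB : lamLB = ∑ q, θ q μt * y q)
    (hymin : IsLeast {r : ℝ | ∃ z : Fin Q → ℝ,
        (∀ q, lamMin (A q) ≤ z q ∧ z q ≤ lamMax (A q)) ∧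
        (∀ i : Fin J, ∑ q, θ q (μs i) * z q ≥ lamMin (∑ q, (θ q (μs i) : ℂ) • A q)) ∧
        r = ∑ q, θ q μt * z q} lamLB) :
    ∃ Abar : Fin Q → Matrix (Fin N) (Fin N) ℂ,
      (∀ q, (Abar q).IsHermitian) ∧
      lamMin (∑ q, (θ q μt : ℂ) • Abar q) = lamLB ∧
      ∀ i : Fin J, lamMin (∑ q, (θ q (μs i) : ℂ) • Abar q)
          = lamMin (∑ q, (θ q (μs i) : ℂ) • A q) :=
  scm_lower_bound_limitation_general A hA θ μs μt hJN v hv1 hv lamLB hymin
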